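/- Subadditivity of the dictionary-based width under superposition: let r_i ≥ 1 and K_i ≥ r_i be integers for 1 ≤ i ≤ l, and set r := Σ_{i=1}^l r_i and K := Σ_{i=1}^l K_i. If each M^{(i)} is nonempty and bounded, then σ_r(M; K) ≤ Σ_{i=1}^l σ_{r_i}(M^{(i)}; K_i). -/

import Mathlib

open Matrix
open scoped ComplexOrder

noncomputable section

variable {𝕂 : Type*} [RCLike 𝕂]

/-- Canonical ℓ2 inner product on `𝕂^n` (conjugate-linear in the first argument). -/
def ip2 {n : ℕ} (x y : Fin n → 𝕂) : 𝕂 := star x ⬝ᵥ y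

/-- Canonical ℓ2 norm on `𝕂^n`. -/
def norm2 {n : ℕ} (x : Fin n → 𝕂) : ℝ := Real.sqrt (RCLike.re (ip2 x x))

/-- Inner product `⟨x,y⟩_U := ⟨R x, y⟩` on `U = 𝕂^n`. -/
def ipU {n : ℕ} (R : Matrix (Fin n) (Fin n) 𝕂) (x y : Fin n → 𝕂) : 𝕂 := ip2 (R *ᵥ x) y

/-- Norm `‖·‖_U` associated with `⟨·,·⟩_U`. -/
def normU {n : ℕ} (R : Matrix (Fin n) (Fin n) 𝕂) (x : Fin n → 𝕂) : ℝ :=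
  Real.sqrt (RCLike.re (ipU R x x))

/-- Dual inner product `⟨x,y⟩_{U'} := ⟨x, R⁻¹ y⟩` on `U' = 𝕂^n`. -/
def ipDual {n : ℕ} (R : Matrix (Fin n) (Fin n) 𝕂) (x y : Fin n → 𝕂) : 𝕂 := ip2 x (R⁻¹ *ᵥ y)

/-- Dual norm `‖·‖_{U'}`. -/
def normDual {n : ℕ} (R : Matrix (Fin n) (Fin n) 𝕂) (x : Fin n → 𝕂) : ℝ :=
  Real.sqrt (RCLike.re (ipDual R x x))

/-- Sketched semi-inner product `⟨x,y⟩_U^Θ := ⟨Θ x, Θ y⟩`. -/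
def ipUS {n k : ℕ} (Θ : Matrix (Fin k) (Fin n) 𝕂) (x y : Fin n → 𝕂) : 𝕂 :=
  ip2 (Θ *ᵥ x) (Θ *ᵥ y)

/-- Sketched seminorm `‖·‖_U^Θ`. -/
def normUS {n k : ℕ} (Θ : Matrix (Fin k) (Fin n) 𝕂) (x : Fin n → 𝕂) : ℝ :=
  Real.sqrt (RCLike.re (ipUS Θ x x))

/-- Sketched dual seminorm `‖x‖_{U'}^Θ = ‖Θ R⁻¹ x‖`. -/
def normDualS {n k : ℕ} (Θ : Matrix (Fin k) (Fin n) 𝕂) (R : Matrix (Fin n) (Fin n) 𝕂)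
    (x : Fin n → 𝕂) : ℝ :=
  normUS Θ (R⁻¹ *ᵥ x)

/-- `Θ` is an `ε`-embedding for the subspace `V` of `U`. -/
def IsEmb {n k : ℕ} (R : Matrix (Fin n) (Fin n) 𝕂) (Θ : Matrix (Fin k) (Fin n) 𝕂)
    (V : Submodule 𝕂 (Fin n → 𝕂)) (ε : ℝ) : Prop :=
  ∀ x ∈ V, ∀ y ∈ V, ‖ipU R x y - ipUS Θ x y‖ ≤ ε * normU R x * normU R y

/-- Distance (in `‖·‖_U`) from `v` to the subspace `W`; equals `‖v - P_W v‖_U`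
where `P_W` is the `⟨·,·⟩_U`-orthogonal projection onto `W`. -/
def distU {n : ℕ} (R : Matrix (Fin n) (Fin n) 𝕂) (v : Fin n → 𝕂)
    (W : Submodule 𝕂 (Fin n → 𝕂)) : ℝ :=
  sInf {t | ∃ w ∈ W, t = normU R (v - w)}

/-- Set of ratios `num x / den x` over nonzero `x ∈ S`. -/
def ratioSet {n : ℕ} (S : Submodule 𝕂 (Fin n → 𝕂)) (num den : (Fin n → 𝕂) → ℝ) : Set ℝ :=
  {t | ∃ x ∈ S, x ≠ 0 ∧ t = num x / den x}

/-- Library `L_r(D)` of all subspaces spanned by `r` vectors from the dictionary `D`. -/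
def LrD {n : ℕ} (D : Finset (Fin n → 𝕂)) (r : ℕ) : Set (Submodule 𝕂 (Fin n → 𝕂)) :=
  {W | ∃ S : Finset (Fin n → 𝕂), S ⊆ D ∧ S.card = r ∧
    W = Submodule.span 𝕂 (S : Set (Fin n → 𝕂))}

/-- Set of ratios `num x / den x` over nonzero `x ∈ span{u} + W` with `W ∈ L_r(D)`. -/
def dictRatioSet {n : ℕ} (D : Finset (Fin n → 𝕂)) (r : ℕ) (u : Fin n → 𝕂)
    (num den : (Fin n → 𝕂) → ℝ) : Set ℝ :=
  {t | ∃ W ∈ LrD D r, ∃ x ∈ Submodule.span 𝕂 {u} ⊔ W, x ≠ 0 ∧ t = num x / den x}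

/-- The subspace `R_r(U_r) = span {R⁻¹ (b - A x) : x ∈ U_r}`. -/
def RrSub {n : ℕ} (R A : Matrix (Fin n) (Fin n) 𝕂) (b : Fin n → 𝕂)
    (Ur : Submodule 𝕂 (Fin n → 𝕂)) : Submodule 𝕂 (Fin n → 𝕂) :=
  Submodule.span 𝕂 {v | ∃ x ∈ Ur, v = R⁻¹ *ᵥ (b - A *ᵥ x)}

/-- Dictionary-based `r`-width `σ_r(M; K)`. -/
def sigmaW {n : ℕ} (R : Matrix (Fin n) (Fin n) 𝕂) (M : Set (Fin n → 𝕂)) (r K : ℕ) : ℝ :=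
  sInf {t | ∃ D : Finset (Fin n → 𝕂), D.card = K ∧
    t = sSup {s | ∃ v ∈ M, s = sInf {e | ∃ W ∈ LrD D r, e = distU R v W}}}

/-- Nonlinear Kolmogorov `r`-width `d_r(M; m)` with a library of `m` subspaces. -/
def dW {n : ℕ} (R : Matrix (Fin n) (Fin n) 𝕂) (M : Set (Fin n → 𝕂)) (r m : ℕ) : ℝ :=
  sInf {t | ∃ L : Finset (Submodule 𝕂 (Fin n → 𝕂)), L.card = m ∧
    (∀ W ∈ L, Module.finrank 𝕂 ↥W ≤ r) ∧
    t = sSup {s | ∃ v ∈ M, s = sInf {e | ∃ W ∈ L, e = distU R v W}}}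

/-- A posteriori estimator `ω̄` of the embedding constant of `Θ` for `V`,
computed from a second embedding `Θs`. -/
def omegaBar {n k ks : ℕ} (ε : ℝ) (Θ : Matrix (Fin k) (Fin n) 𝕂)
    (Θs : Matrix (Fin ks) (Fin n) 𝕂) (V : Submodule 𝕂 (Fin n → 𝕂)) : ℝ :=
  max (1 - (1 - ε) * sInf {t | ∃ x ∈ V, x ≠ 0 ∧ t = (normUS Θ x / normUS Θs x) ^ 2})
      ((1 + ε) * sSup {t | ∃ x ∈ V, x ≠ 0 ∧ t = (normUS Θ x / normUS Θs x) ^ 2} - 1)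

section AuxLemmas

variable {n : ℕ} {R : Matrix (Fin n) (Fin n) 𝕂}

open scoped MatrixOrder

lemma norm2_eq_norm (z : Fin n → 𝕂) :
    norm2 z = ‖(WithLp.equiv 2 (Fin n → 𝕂)).symm z‖ := by
  rw [norm2, ip2, EuclideanSpace.norm_eq]
  congr 1
  rw [dotProduct, map_sum]
  refine Finset.sum_congr rfl fun i _ => ?_
  rw [WithLp.equiv_symm_apply, PiLp.toLp_apply, Pi.star_apply, RCLike.star_def, RCLike.conj_mul,
    ← RCLike.ofReal_pow, RCLike.ofReal_re]

lemma ipU_self_eq (hR : R.PosDef) (x : Fin n → 𝕂) :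
    ipU R x x = ip2 (CFC.sqrt R *ᵥ x) (CFC.sqrt R *ᵥ x) := by
  have hs : CFC.sqrt R * CFC.sqrt R = R := CFC.sqrt_mul_sqrt_self R hR.posSemidef.nonneg
  have hh : (CFC.sqrt R)ᴴ = CFC.sqrt R := (CFC.sqrt_nonneg R).posSemidef.1
  rw [ipU, ip2, ip2, Matrix.star_mulVec, Matrix.star_mulVec, hh, hR.1.eq,
    Matrix.dotProduct_mulVec, Matrix.vecMul_vecMul, hs]

lemma normU_eq_norm (hR : R.PosDef) (x : Fin n → 𝕂) :
    normU R x = ‖(WithLp.equiv 2 (Fin n → 𝕂)).symm (CFC.sqrt R *ᵥ x)‖ := by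
  rw [normU, ipU_self_eq hR]
  exact norm2_eq_norm _

lemma normU_nonneg (R : Matrix (Fin n) (Fin n) 𝕂) (x : Fin n → 𝕂) : 0 ≤ normU R x :=
  Real.sqrt_nonneg _

lemma normU_zero (R : Matrix (Fin n) (Fin n) 𝕂) : normU R (0 : Fin n → 𝕂) = 0 := by
  simp [normU, ipU, ip2]

lemma normU_add_le (hR : R.PosDef) (x y : Fin n → 𝕂) :
    normU R (x + y) ≤ normU R x + normU R y := by
  rw [normU_eq_norm hR, normU_eq_norm hR, normU_eq_norm hR, Matrix.mulVec_add,
    WithLp.equiv_symm_apply, WithLp.toLp_add]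
  exact norm_add_le _ _

lemma normU_sum_le (hR : R.PosDef) {ι : Type*} (s : Finset ι) (f : ι → (Fin n → 𝕂)) :
    normU R (∑ i ∈ s, f i) ≤ ∑ i ∈ s, normU R (f i) := by
  classical
  induction s using Finset.cons_induction with
  | empty => simp [normU_zero]
  | cons a s ha ih =>
    rw [Finset.sum_cons, Finset.sum_cons]
    exact le_trans (normU_add_le hR _ _) (add_le_add_right ih _)

lemma distU_nonneg (R : Matrix (Fin n) (Fin n) 𝕂) (v : Fin n → 𝕂)
    (W : Submodule 𝕂 (Fin n → 𝕂)) : 0 ≤ distU R v W := by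
  refine Real.sInf_nonneg ?_
  rintro t ⟨w, -, rfl⟩
  exact Real.sqrt_nonneg _

lemma distU_le (R : Matrix (Fin n) (Fin n) 𝕂) {v w : Fin n → 𝕂}
    {W : Submodule 𝕂 (Fin n → 𝕂)} (hw : w ∈ W) : distU R v W ≤ normU R (v - w) := by
  refine csInf_le ⟨0, ?_⟩ ⟨w, hw, rfl⟩
  rintro t ⟨w', -, rfl⟩
  exact Real.sqrt_nonneg _

end AuxLemmas

/-- Subadditivity of the dictionary-based width under superposition. -/
theorem dictionary_width_superposition {𝕂 : Type*} [RCLike 𝕂] {n l : ℕ} (hl : 1 ≤ l)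
    (R : Matrix (Fin n) (Fin n) 𝕂) (hR : R.PosDef)
    {P : Type*} (uu : Fin l → P → (Fin n → 𝕂))
    (hne : ∀ i, (Set.range (uu i)).Nonempty)
    (hbdd : ∀ i, ∃ C : ℝ, ∀ v ∈ Set.range (uu i), normU R v ≤ C)
    (rr KK : Fin l → ℕ) (hr : ∀ i, 1 ≤ rr i) (hrK : ∀ i, rr i ≤ KK i) :
    sigmaW R {x | ∃ μ : P, x = ∑ i, uu i μ} (∑ i, rr i) (∑ i, KK i)
      ≤ ∑ i, sigmaW R (Set.range (uu i)) (rr i) (KK i) := by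
  classical
  have hl0 : 0 < l := hl
  -- every element of a sigmaW defining set is nonnegative
  have hmemnn : ∀ (M : Set (Fin n → 𝕂)) (r K : ℕ) (t : ℝ),
      (∃ D : Finset (Fin n → 𝕂), D.card = K ∧
        t = sSup {s | ∃ v ∈ M, s = sInf {e | ∃ W ∈ LrD D r, e = distU R v W}}) → 0 ≤ t := by
    rintro M r K t ⟨D, -, rfl⟩
    refine Real.sSup_nonneg ?_
    rintro s ⟨v, -, rfl⟩
    refine Real.sInf_nonneg ?_
    rintro e ⟨W, -, rfl⟩
    exact distU_nonneg R v W
  have hσnn : ∀ i, 0 ≤ sigmaW R (Set.range (uu i)) (rr i) (KK i) := fun i =>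
    Real.sInf_nonneg fun t ht => hmemnn _ _ _ t ht
  rcases Nat.eq_zero_or_pos n with hn | hn
  · -- degenerate case `n = 0` : the left-hand side is `≤ 0 ≤` RHS
    subst hn
    haveI : Subsingleton (Fin 0 → 𝕂) := ⟨fun a b => funext fun i => i.elim0⟩
    have hall : ∀ x : Fin 0 → 𝕂, x = 0 := fun x => Subsingleton.elim x 0
    have hLHS : sigmaW R {x | ∃ μ : P, x = ∑ i, uu i μ} (∑ i, rr i) (∑ i, KK i) ≤ 0 := by
      rw [sigmaW]
      rcases Set.eq_empty_or_nonempty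
        {t | ∃ D : Finset (Fin 0 → 𝕂), D.card = (∑ i, KK i) ∧
          t = sSup {s | ∃ v ∈ {x | ∃ μ : P, x = ∑ i, uu i μ},
            s = sInf {e | ∃ W ∈ LrD D (∑ i, rr i), e = distU R v W}}} with hS | hS
      · rw [hS, Real.sInf_empty]
      · obtain ⟨t, ht⟩ := hS
        have htle : ∀ t', t' ∈ {t | ∃ D : Finset (Fin 0 → 𝕂), D.card = (∑ i, KK i) ∧
            t = sSup {s | ∃ v ∈ {x | ∃ μ : P, x = ∑ i, uu i μ},
              s = sInf {e | ∃ W ∈ LrD D (∑ i, rr i), e = distU R v W}}} → t' ≤ 0 := by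
          rintro t' ⟨D, -, rfl⟩
          refine Real.sSup_le ?_ le_rfl
          rintro s ⟨v, -, rfl⟩
          rcases Set.eq_empty_or_nonempty
            {e | ∃ W ∈ LrD D (∑ i, rr i), e = distU R v W} with hE | hE
          · rw [hE, Real.sInf_empty]
          · obtain ⟨e, W, hW, rfl⟩ := hE
            have hdz : ∀ (W : Submodule 𝕂 (Fin 0 → 𝕂)), distU R v W = 0 := by
              intro W
              have h1 : distU R v W ≤ normU R (v - 0) := distU_le R W.zero_mem
              rw [hall (v - 0), normU_zero] at h1
              exact le_antisymm h1 (distU_nonneg R v W)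
            have hmem0 : (0 : ℝ) ∈ {e | ∃ W ∈ LrD D (∑ i, rr i), e = distU R v W} :=
              ⟨W, hW, (hdz W).symm⟩
            refine csInf_le ⟨0, ?_⟩ hmem0
            rintro e' ⟨W', -, rfl⟩
            exact distU_nonneg R v W'
        exact (csInf_le ⟨0, fun t' ht' => hmemnn _ _ _ t' ht'⟩ ht).trans (htle t ht)
    exact hLHS.trans (Finset.sum_nonneg fun i _ => hσnn i)
  -- main case `1 ≤ n`
  haveI : Infinite 𝕂 := Infinite.of_injective (Nat.cast : ℕ → 𝕂) Nat.cast_injective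
  haveI : Infinite (Fin n → 𝕂) :=
    Infinite.of_injective (fun (c : 𝕂) (_ : Fin n) => c)
      (fun a b h => congrFun h ⟨0, hn⟩)
  refine le_of_forall_pos_le_add fun ε hε => ?_
  have hεl : 0 < ε / l := div_pos hε (by exact_mod_cast hl0)
  -- choose near-optimal dictionaries for each i
  have key : ∀ i, ∃ D : Finset (Fin n → 𝕂), D.card = KK i ∧
      sSup {s | ∃ v ∈ Set.range (uu i),
          s = sInf {e | ∃ W ∈ LrD D (rr i), e = distU R v W}}
        < sigmaW R (Set.range (uu i)) (rr i) (KK i) + ε / l := by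
    intro i
    obtain ⟨D0, -, hD0⟩ :=
      Infinite.exists_superset_card_eq (∅ : Finset (Fin n → 𝕂)) (KK i) (by simp)
    obtain ⟨a, ⟨D, hDcard, rfl⟩, ha⟩ :=
      Real.lt_sInf_add_pos (s := {t | ∃ D : Finset (Fin n → 𝕂), D.card = KK i ∧
        t = sSup {s | ∃ v ∈ Set.range (uu i),
          s = sInf {e | ∃ W ∈ LrD D (rr i), e = distU R v W}}})
        ⟨_, D0, hD0, rfl⟩ hεl
    exact ⟨D, hDcard, ha⟩
  choose D hDcard hDlt using key
  set t : Fin l → ℝ := fun i => sSup {s | ∃ v ∈ Set.range (uu i),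
    s = sInf {e | ∃ W ∈ LrD (D i) (rr i), e = distU R v W}} with ht
  have htnn : ∀ i, 0 ≤ t i := by
    intro i
    refine Real.sSup_nonneg ?_
    rintro s ⟨v, -, rfl⟩
    refine Real.sInf_nonneg ?_
    rintro e ⟨W, -, rfl⟩
    exact distU_nonneg R v W
  -- assemble a big dictionary
  have hDallcard : (Finset.univ.biUnion D).card ≤ ∑ i, KK i :=
    le_trans Finset.card_biUnion_le (le_of_eq (Finset.sum_congr rfl fun i _ => hDcard i))
  obtain ⟨Dbig, hsub, hDbigcard⟩ :=
    Infinite.exists_superset_card_eq (Finset.univ.biUnion D) (∑ i, KK i) hDallcard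
  -- the key estimate for the big dictionary
  have hmain : sSup {s | ∃ v ∈ {x | ∃ μ : P, x = ∑ i, uu i μ},
      s = sInf {e | ∃ W ∈ LrD Dbig (∑ i, rr i), e = distU R v W}} ≤ ∑ i, t i := by
    refine Real.sSup_le ?_ (Finset.sum_nonneg fun i _ => htnn i)
    rintro s ⟨v, ⟨μ, rfl⟩, rfl⟩
    refine le_of_forall_pos_le_add fun δ hδ => ?_
    have hδ' : 0 < δ / (2 * l) := by positivity
    have step : ∀ i, ∃ (S : Finset (Fin n → 𝕂)) (w : Fin n → 𝕂),
        S ⊆ D i ∧ S.card = rr i ∧ w ∈ Submodule.span 𝕂 (S : Set (Fin n → 𝕂)) ∧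
        normU R (uu i μ - w) < t i + 2 * (δ / (2 * l)) := by
      intro i
      obtain ⟨S0, hS0sub, hS0card⟩ :=
        Finset.exists_subset_card_eq (s := D i) (n := rr i) (by rw [hDcard i]; exact hrK i)
      have hW0 : Submodule.span 𝕂 (S0 : Set (Fin n → 𝕂)) ∈ LrD (D i) (rr i) :=
        ⟨S0, hS0sub, hS0card, rfl⟩
      -- the value for `uu i μ` is at most `t i`
      have hBdd : BddAbove {s | ∃ v ∈ Set.range (uu i),
          s = sInf {e | ∃ W ∈ LrD (D i) (rr i), e = distU R v W}} := by
        obtain ⟨C, hC⟩ := hbdd i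
        refine ⟨C, ?_⟩
        rintro s ⟨v, hv, rfl⟩
        have h1 : sInf {e | ∃ W ∈ LrD (D i) (rr i), e = distU R v W}
            ≤ distU R v (Submodule.span 𝕂 (S0 : Set (Fin n → 𝕂))) := by
          refine csInf_le ⟨0, ?_⟩ ⟨_, hW0, rfl⟩
          rintro e ⟨W, -, rfl⟩
          exact distU_nonneg R v W
        have h2 := distU_le R (v := v)
          (W := Submodule.span 𝕂 (S0 : Set (Fin n → 𝕂))) (Submodule.zero_mem _)
        rw [sub_zero] at h2
        exact h1.trans (h2.trans (hC v hv))
      have hsi : sInf {e | ∃ W ∈ LrD (D i) (rr i), e = distU R (uu i μ) W} ≤ t i :=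
        le_csSup hBdd ⟨uu i μ, ⟨μ, rfl⟩, rfl⟩
      -- pick a near-optimal subspace
      obtain ⟨e, ⟨W, ⟨S, hSsub, hScard, rfl⟩, rfl⟩, hee⟩ :=
        Real.lt_sInf_add_pos (s := {e | ∃ W ∈ LrD (D i) (rr i), e = distU R (uu i μ) W})
          ⟨_, _, hW0, rfl⟩ hδ'
      -- pick a near-optimal element of that subspace
      obtain ⟨a, ⟨w, hw, rfl⟩, haa⟩ :=
        Real.lt_sInf_add_pos (s := {t | ∃ w ∈ Submodule.span 𝕂 (S : Set (Fin n → 𝕂)),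
          t = normU R (uu i μ - w)}) ⟨_, ⟨0, Submodule.zero_mem _, rfl⟩⟩ hδ'
      refine ⟨S, w, hSsub, hScard, hw, ?_⟩
      have : distU R (uu i μ) (Submodule.span 𝕂 (S : Set (Fin n → 𝕂)))
          < t i + δ / (2 * l) := lt_of_lt_of_le hee (by linarith)
      calc normU R (uu i μ - w)
          < distU R (uu i μ) (Submodule.span 𝕂 (S : Set (Fin n → 𝕂))) + δ / (2 * l) := haa
        _ < t i + δ / (2 * l) + δ / (2 * l) := by linarith
        _ = t i + 2 * (δ / (2 * l)) := by ring
    choose S w hSsub hScard hwmem hwlt using step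
    -- assemble a subspace in the big library
    have hTsub : Finset.univ.biUnion S ⊆ Dbig := by
      intro x hx
      obtain ⟨i, -, hxi⟩ := Finset.mem_biUnion.1 hx
      exact hsub (Finset.mem_biUnion.2 ⟨i, Finset.mem_univ i, hSsub i hxi⟩)
    have hTcard : (Finset.univ.biUnion S).card ≤ ∑ i, rr i :=
      le_trans Finset.card_biUnion_le (le_of_eq (Finset.sum_congr rfl fun i _ => hScard i))
    obtain ⟨T', hTT', hT'sub, hT'card⟩ :=
      Finset.exists_subsuperset_card_eq hTsub hTcard
        (by rw [hDbigcard]; exact Finset.sum_le_sum fun i _ => hrK i)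
    have hW' : Submodule.span 𝕂 (T' : Set (Fin n → 𝕂)) ∈ LrD Dbig (∑ i, rr i) :=
      ⟨T', hT'sub, hT'card, rfl⟩
    have hwmem' : ∀ i, w i ∈ Submodule.span 𝕂 (T' : Set (Fin n → 𝕂)) := by
      intro i
      refine Submodule.span_mono ?_ (hwmem i)
      exact_mod_cast Finset.coe_subset.2
        ((Finset.subset_biUnion_of_mem S (Finset.mem_univ i)).trans hTT')
    have hwtot : (∑ i, w i) ∈ Submodule.span 𝕂 (T' : Set (Fin n → 𝕂)) :=
      Submodule.sum_mem _ fun i _ => hwmem' i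
    have h1 : sInf {e | ∃ W ∈ LrD Dbig (∑ i, rr i), e = distU R (∑ i, uu i μ) W}
        ≤ distU R (∑ i, uu i μ) (Submodule.span 𝕂 (T' : Set (Fin n → 𝕂))) := by
      refine csInf_le ⟨0, ?_⟩ ⟨_, hW', rfl⟩
      rintro e ⟨W, -, rfl⟩
      exact distU_nonneg R _ W
    have h2 : distU R (∑ i, uu i μ) (Submodule.span 𝕂 (T' : Set (Fin n → 𝕂)))
        ≤ normU R ((∑ i, uu i μ) - ∑ i, w i) := distU_le R hwtot
    have h3 : normU R ((∑ i, uu i μ) - ∑ i, w i) ≤ ∑ i, normU R (uu i μ - w i) := by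
      rw [← Finset.sum_sub_distrib]
      exact normU_sum_le hR _ _
    have h4 : ∑ i, normU R (uu i μ - w i) ≤ ∑ i, (t i + 2 * (δ / (2 * l))) :=
      Finset.sum_le_sum fun i _ => (hwlt i).le
    have h5 : ∑ i, (t i + 2 * (δ / (2 * l))) = (∑ i, t i) + δ := by
      rw [Finset.sum_add_distrib, Finset.sum_const, Finset.card_univ, Fintype.card_fin,
        nsmul_eq_mul]
      have hlne : (l : ℝ) ≠ 0 := by exact_mod_cast hl0.ne'
      field_simp
    linarith
  -- conclude
  have hLHS : sigmaW R {x | ∃ μ : P, x = ∑ i, uu i μ} (∑ i, rr i) (∑ i, KK i)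
      ≤ ∑ i, t i := by
    refine le_trans (csInf_le ⟨0, fun t' ht' => hmemnn _ _ _ t' ht'⟩
      ⟨Dbig, hDbigcard, rfl⟩) hmain
  have hsum : ∑ i, t i ≤ (∑ i, sigmaW R (Set.range (uu i)) (rr i) (KK i)) + ε := by
    calc ∑ i, t i ≤ ∑ i, (sigmaW R (Set.range (uu i)) (rr i) (KK i) + ε / l) :=
          Finset.sum_le_sum fun i _ => (hDlt i).le
      _ = (∑ i, sigmaW R (Set.range (uu i)) (rr i) (KK i)) + ε := by
          rw [Finset.sum_add_distrib, Finset.sum_const, Finset.card_univ, Fintype.card_fin,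
            nsmul_eq_mul]
          have hlne : (l : ℝ) ≠ 0 := by exact_mod_cast hl0.ne'
          field_simp
  exact hLHS.trans hsum

end
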